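/- arXiv:2101.05449 — 12 statements merged into one kernel-verified Lean document; each statement's English description precedes it below -/
import Mathlib

section
/- If R is a nontrivial ring in which every non central-unit is a sum of two nilpotents, then every central element of R that is not a unit is nilpotent. -/
/-- A ring has the 2-nil-sum property if every element that is not a central unit
is a sum of two nilpotents. -/
def TwoNilSum (R : Type*) [Ring R] : Prop :=
  ∀ a : R, ¬ (a ∈ Set.center R ∧ IsUnit a) →
    ∃ b c : R, IsNilpotent b ∧ IsNilpotent c ∧ a = b + c

theorem isNilpotent_add_of_commute_add_left {R : Type*} [Ring R] {b c : R}
    (hb : IsNilpotent b) (hc : IsNilpotent c) (h : Commute (b + c) b) :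
    IsNilpotent (b + c) := by
  have hbc : Commute b c := by
    simpa using h.symm.sub_right (Commute.refl b)
  exact hbc.isNilpotent_add hb hc

theorem stmt_0_general (R : Type*) [Ring R] (h : TwoNilSum R) :
    ∀ a : R, a ∈ Set.center R → ¬ IsUnit a → IsNilpotent a := by
  intro a ha hu
  obtain ⟨b, c, hb, hc, rfl⟩ := h a fun hcu => hu hcu.2
  exact isNilpotent_add_of_commute_add_left hb hc (Set.mem_center_iff.mp ha |>.1 b)

theorem stmt_0 (R : Type*) [Ring R] [Nontrivial R] (h : TwoNilSum R) :
    ∀ a : R, a ∈ Set.center R → ¬ IsUnit a → IsNilpotent a :=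
  stmt_0_general R h
end

section
/- If R is a nontrivial ring with the 2-nil-sum property, then the center C(R) of R is a local ring whose Jacobson radical is nil. -/
theorem Subring.isUnit_center_of_isUnit_coe {R : Type*} [Ring R] {x : Subring.center R}
    (hx : IsUnit (x : R)) : IsUnit x := by
  obtain ⟨u, hu⟩ := hx
  have hinv : (↑u⁻¹ : R) ∈ Set.center R := Set.units_inv_mem_center (hu ▸ x.2)
  exact ⟨⟨x, ⟨_, hinv⟩, Subtype.ext (by simp [← hu]), Subtype.ext (by simp [← hu])⟩, rfl⟩

theorem IsNilpotent.of_mem_center_of_eq_add {R : Type*} [Ring R] {x b c : R}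
    (hx : x ∈ Set.center R) (hb : IsNilpotent b) (hc : IsNilpotent c) (hxbc : x = b + c) :
    IsNilpotent x := by
  have hbx : Commute b x := ((Set.mem_center_iff.mp hx).1 b).symm
  have hbc : Commute b c := by
    simpa [hxbc] using hbx.sub_right (Commute.refl b)
  exact hxbc ▸ hbc.isNilpotent_add hb hc

namespace TwoNilSum

variable {R : Type*} [Ring R]

theorem isNilpotent_of_mem_center_of_not_isUnit (h : TwoNilSum R) {x : R}
    (hx : x ∈ Set.center R) (hu : ¬IsUnit x) : IsNilpotent x := by
  obtain ⟨b, c, hb, hc, hxbc⟩ := h x fun hxu => hu hxu.2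
  exact .of_mem_center_of_eq_add hx hb hc hxbc

theorem isNilpotent_center_of_not_isUnit (h : TwoNilSum R) {x : Subring.center R}
    (hx : ¬IsUnit x) : IsNilpotent x := by
  obtain ⟨n, hn⟩ := h.isNilpotent_of_mem_center_of_not_isUnit x.2
    fun hu => hx (Subring.isUnit_center_of_isUnit_coe hu)
  exact ⟨n, Subtype.ext (by simpa using hn)⟩

theorem isLocalRing_center [Nontrivial R] (h : TwoNilSum R) : IsLocalRing (Subring.center R) :=
  .of_isUnit_or_isUnit_one_sub_self fun _ =>
    or_iff_not_imp_left.mpr fun hx => (h.isNilpotent_center_of_not_isUnit hx).isUnit_one_sub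

end TwoNilSum

theorem stmt_1 (R : Type*) [Ring R] [Nontrivial R] (h : TwoNilSum R) :
    IsLocalRing (Subring.center R) ∧
      ∀ x : Subring.center R,
        x ∈ Ideal.jacobson (⊥ : Ideal (Subring.center R)) → IsNilpotent x := by
  have := h.isLocalRing_center
  refine ⟨this, fun x hx => h.isNilpotent_center_of_not_isUnit ?_⟩
  rwa [IsLocalRing.jacobson_eq_maximalIdeal ⊥ bot_ne_top, IsLocalRing.mem_maximalIdeal,
    mem_nonunits_iff] at hx
end

section
/- If R is a nontrivial ring with the 2-nil-sum property and I is a proper two-sided ideal of R, then every element of I is central and nilpotent. -/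
namespace TwoSidedIdeal

variable {R : Type*} [Ring R] {I : TwoSidedIdeal R}

lemma nontrivial_ringCon_quotient (hI : I ≠ ⊤) : Nontrivial I.ringCon.Quotient := by
  refine ⟨1, 0, fun h => hI (I.one_mem_iff.mp ?_)⟩
  simpa using (I.mem_iff 1).mpr (I.ringCon.eq.mp (by simpa using h))

lemma not_isUnit_of_mem (hI : I ≠ ⊤) {x : R} (hx : x ∈ I) : ¬IsUnit x := by
  rintro ⟨u, rfl⟩
  exact hI (I.one_mem_iff.mp (by simpa using I.mul_mem_left (↑u⁻¹) _ hx))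

end TwoSidedIdeal

section

variable {R : Type*} [Ring R]

lemma add_ne_one_of_isNilpotent [Nontrivial R] {a b : R} (ha : IsNilpotent a)
    (hb : IsNilpotent b) : a + b ≠ 1 := fun hab =>
  ha.not_isUnit (eq_sub_of_add_eq hab ▸ hb.isUnit_one_sub)

lemma commute_of_add_mem_center {b c : R} (h : b + c ∈ Set.center R) : Commute b c := by
  have hb : Commute b (b + c) := ((Set.mem_center_iff.mp h).comm b).symm
  simpa using hb.sub_right (Commute.refl b)

namespace TwoNilSum

variable (h : TwoNilSum R)
include h

lemma mem_center_isUnit_of_sub_one_mem {I : TwoSidedIdeal R} (hI : I ≠ ⊤) {a : R}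
    (ha : a - 1 ∈ I) : a ∈ Set.center R ∧ IsUnit a := by
  by_contra hnot
  obtain ⟨b, c, hb, hc, rfl⟩ := h a hnot
  have := TwoSidedIdeal.nontrivial_ringCon_quotient hI
  have hmk : I.ringCon.mk' (b + c) = 1 := by
    rw [← map_one I.ringCon.mk']
    exact I.ringCon.eq.mpr ((I.rel_iff _ _).mpr ha)
  exact add_ne_one_of_isNilpotent (hb.map I.ringCon.mk') (hc.map I.ringCon.mk')
    (by rw [← map_add, hmk])

lemma isNilpotent_of_mem_center_of_not_isUnit_s2 {x : R} (hxc : x ∈ Set.center R)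
    (hxu : ¬IsUnit x) : IsNilpotent x := by
  obtain ⟨b, c, hb, hc, rfl⟩ := h x fun hx => hxu hx.2
  exact (commute_of_add_mem_center hxc).isNilpotent_add hb hc

end TwoNilSum

end

theorem stmt_2_general (R : Type*) [Ring R] (h : TwoNilSum R)
    (I : TwoSidedIdeal R) (hI : I ≠ ⊤) :
    ∀ x ∈ I, x ∈ Set.center R ∧ IsNilpotent x := by
  intro x hx
  have hunit : 1 + x ∈ Set.center R ∧ IsUnit (1 + x) :=
    h.mem_center_isUnit_of_sub_one_mem hI (by simpa using hx)
  have hxc : x ∈ Set.center R := by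
    simpa using Set.add_mem_center hunit.1 (Set.neg_mem_center Set.one_mem_center)
  exact ⟨hxc, h.isNilpotent_of_mem_center_of_not_isUnit_s2 hxc (TwoSidedIdeal.not_isUnit_of_mem hI hx)⟩

theorem stmt_2 (R : Type*) [Ring R] [Nontrivial R] (h : TwoNilSum R)
    (I : TwoSidedIdeal R) (hI : I ≠ ⊤) :
    ∀ x ∈ I, x ∈ Set.center R ∧ IsNilpotent x :=
  stmt_2_general R h I hI
end

section
/- If R is a nontrivial ring with the 2-nil-sum property, then every proper two-sided ideal of R is contained in the Jacobson radical J(R). -/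
theorem subsingleton_of_isNilpotent_add_eq_one {S : Type*} [Ring S] {b c : S}
    (hb : IsNilpotent b) (hc : IsNilpotent c) (h : b + c = 1) : Subsingleton S := by
  by_contra hS
  have : Nontrivial S := not_subsingleton_iff_nontrivial.mp hS
  exact hc.not_isUnit (by simpa [← h] using hb.isUnit_one_sub)

theorem TwoSidedIdeal.eq_top_of_isNilpotent_add_sub_one_mem {R : Type*} [Ring R]
    {I : TwoSidedIdeal R} {b c : R} (hb : IsNilpotent b) (hc : IsNilpotent c)
    (h : b + c - 1 ∈ I) : I = ⊤ := by
  let π := Ideal.Quotient.mk I.asIdeal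
  have hsum : π b + π c = 1 := by
    rw [← map_add, ← map_one π, Ideal.Quotient.eq, mem_asIdeal]
    exact h
  have hI : I.asIdeal = ⊤ := Ideal.Quotient.subsingleton_iff.mp
    (subsingleton_of_isNilpotent_add_eq_one (hb.map π) (hc.map π) hsum)
  exact I.eq_top (mem_asIdeal.mp (hI ▸ Submodule.mem_top))

theorem TwoNilSum.isUnit_of_sub_one_mem {R : Type*} [Ring R] (h : TwoNilSum R)
    {I : TwoSidedIdeal R} (hI : I ≠ ⊤) {a : R} (ha : a - 1 ∈ I) : IsUnit a := by
  by_contra ha_unit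
  obtain ⟨b, c, hb, hc, rfl⟩ := h a (fun hcu => ha_unit hcu.2)
  exact hI (TwoSidedIdeal.eq_top_of_isNilpotent_add_sub_one_mem hb hc ha)

theorem Ideal.mem_jacobson_bot_of_forall_isUnit_mul_add_one {R : Type*} [Ring R] {x : R}
    (h : ∀ y, IsUnit (y * x + 1)) : x ∈ jacobson (⊥ : Ideal R) := by
  rw [mem_jacobson_iff]
  intro y
  obtain ⟨u, hu⟩ := h y
  refine ⟨↑u⁻¹, ?_⟩
  have hinv : (↑u⁻¹ : R) * (y * x + 1) = 1 := by rw [← hu, Units.inv_mul]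
  rw [Submodule.mem_bot, ← hinv]
  noncomm_ring

theorem stmt_3_general (R : Type*) [Ring R] (h : TwoNilSum R)
    (I : TwoSidedIdeal R) (hI : I ≠ ⊤) :
    ∀ x ∈ I, x ∈ Ideal.jacobson (⊥ : Ideal R) :=
  fun x hx => Ideal.mem_jacobson_bot_of_forall_isUnit_mul_add_one fun y =>
    h.isUnit_of_sub_one_mem hI (by simpa using I.mul_mem_left y x hx)

theorem stmt_3 (R : Type*) [Ring R] [Nontrivial R] (h : TwoNilSum R)
    (I : TwoSidedIdeal R) (hI : I ≠ ⊤) :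
    ∀ x ∈ I, x ∈ Ideal.jacobson (⊥ : Ideal R) :=
  stmt_3_general R h I hI
end

section
/- If R is a nontrivial ring with the 2-nil-sum property, then the Jacobson radical J(R) is nil and is contained in the center of R. -/
namespace Ideal

variable {R : Type*} [Ring R] {x : R}

theorem exists_mul_one_add_eq_one_of_mem_jacobson_bot (hx : x ∈ jacobson (⊥ : Ideal R)) :
    ∃ z, z * (1 + x) = 1 := by
  obtain ⟨z, hz⟩ := mem_jacobson_iff.1 hx 1
  refine ⟨z, ?_⟩
  rw [mem_bot, sub_eq_zero, mul_one] at hz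
  rw [mul_add, mul_one, add_comm, hz]

/-- The left inverse `z` of `1 + x` is itself of the form `1 + y` with `y = -z x ∈ J(R)`, so it
has a left inverse too, which forces `1 + x` to be a two-sided inverse of `z`. -/
theorem isUnit_one_add_of_mem_jacobson_bot (hx : x ∈ jacobson (⊥ : Ideal R)) :
    IsUnit (1 + x) := by
  obtain ⟨z, hz⟩ := exists_mul_one_add_eq_one_of_mem_jacobson_bot hx
  have hz' : z = 1 + -(z * x) := by rw [← hz]; noncomm_ring
  obtain ⟨w, hw⟩ := exists_mul_one_add_eq_one_of_mem_jacobson_bot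
    (neg_mem (mul_mem_left _ z hx))
  rw [← hz'] at hw
  exact isUnit_iff_exists.2 ⟨z, left_inv_eq_right_inv hw hz ▸ hw, hz⟩

theorem isUnit_add_of_mem_jacobson_bot {u : R} (hu : IsUnit u)
    (hx : x ∈ jacobson (⊥ : Ideal R)) : IsUnit (u + x) := by
  obtain ⟨u, rfl⟩ := hu
  have h : (u : R) * (1 + ↑u⁻¹ * x) = u + x := by
    rw [mul_add, mul_one, ← mul_assoc, u.mul_inv, one_mul]
  exact h ▸ u.isUnit.mul (isUnit_one_add_of_mem_jacobson_bot (mul_mem_left _ _ hx))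

theorem not_isUnit_of_mem_jacobson_bot [Nontrivial R] (hx : x ∈ jacobson (⊥ : Ideal R)) :
    ¬ IsUnit x := fun hu =>
  bot_ne_top (jacobson_eq_top_iff.1 (eq_top_of_isUnit_mem _ hx hu))

end Ideal

namespace TwoNilSum

variable {R : Type*} [Ring R] {x : R}

theorem isNilpotent_of_mem_center (h : TwoNilSum R) (hx : x ∈ Set.center R)
    (hxu : ¬ IsUnit x) : IsNilpotent x := by
  obtain ⟨b, c, hb, hc, rfl⟩ := h _ fun hx' => hxu hx'.2
  have hbc : Commute b c := by
    simpa using (hx.comm b).symm.sub_right (Commute.refl b)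
  exact hbc.isNilpotent_add hb hc

theorem one_add_mem_center_of_mem_jacobson_bot [Nontrivial R] (h : TwoNilSum R)
    (hx : x ∈ Ideal.jacobson (⊥ : Ideal R)) : 1 + x ∈ Set.center R := by
  by_contra hcen
  obtain ⟨b, c, hb, hc, hsum⟩ := h (1 + x) fun h' => hcen h'.1
  have hc' : c = (1 - b) + x := by rw [← sub_eq_of_eq_add' hsum]; noncomm_ring
  exact hc.not_isUnit (hc' ▸ Ideal.isUnit_add_of_mem_jacobson_bot hb.isUnit_one_sub hx)

theorem mem_center_of_mem_jacobson_bot [Nontrivial R] (h : TwoNilSum R)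
    (hx : x ∈ Ideal.jacobson (⊥ : Ideal R)) : x ∈ Set.center R := by
  have h1 := Set.add_mem_center (h.one_add_mem_center_of_mem_jacobson_bot hx)
    (Set.neg_mem_center (Set.one_mem_center (M := R)))
  rwa [add_neg_cancel_comm] at h1

end TwoNilSum

theorem stmt_4 (R : Type*) [Ring R] [Nontrivial R] (h : TwoNilSum R) :
    ∀ x ∈ Ideal.jacobson (⊥ : Ideal R), IsNilpotent x ∧ x ∈ Set.center R := fun _ hx =>
  have hcen := h.mem_center_of_mem_jacobson_bot hx
  ⟨h.isNilpotent_of_mem_center hcen (Ideal.not_isUnit_of_mem_jacobson_bot hx), hcen⟩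
end

section
/- A nontrivial ring R satisfies the 2-nil-sum property if and only if R is either a simple ring with the 2-nil-sum property or a commutative local ring with nil Jacobson radical. -/
/-!
If `x` lies in a proper two-sided ideal `I`, then `1 + x` is a central unit: otherwise
`1 = b + c` modulo `I` with `b, c` nilpotent, and `b = 1 - c` would be a nilpotent unit of `R ⧸ I`.
So proper two-sided ideals are central. If `R` is not simple, pick `z ≠ 0` in such an ideal; then
`z * R` is central, which forces `(a * b - b * a) * z = 0`, so `R` modulo the annihilator of `z`
is a nontrivial commutative ring. There a non-central unit, being a sum of two nilpotents, would
become a nilpotent unit. So units are central, hence so are the nilpotents `(1 + n) - 1`, hence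
every element. Finally, a commutative ring has the 2-nil-sum property exactly when its non-units
are nilpotent, i.e. when it is local and its maximal ideal, the Jacobson radical, is nil.
-/

lemma commutator_mul_eq_zero_of_forall_mul_mem_center {R : Type*} [Ring R] {z : R}
    (hz : ∀ a, z * a ∈ Set.center R) (a b : R) : (a * b - b * a) * z = 0 := by
  have hzc : ∀ g, g * z = z * g := fun g => by
    simpa using Semigroup.mem_center_iff.mp (hz 1) g
  have hab : a * b * z = b * a * z :=
    calc a * b * z = z * a * b := by rw [mul_assoc, hzc, ← mul_assoc, hzc]
      _ = b * (z * a) := (Semigroup.mem_center_iff.mp (hz a) b).symm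
      _ = b * a * z := by rw [← hzc, mul_assoc]
  rw [sub_mul, hab, sub_self]

lemma mem_center_of_one_add_mem_center {R : Type*} [Ring R] {x : R}
    (hx : 1 + x ∈ Set.center R) : x ∈ Set.center R := by
  have := (Subring.center R).sub_mem hx (Subring.center R).one_mem
  rwa [add_sub_cancel_left] at this

namespace TwoNilSum

section Ring

variable {R : Type*} [Ring R]

theorem mem_center_of_mem (h : TwoNilSum R) {I : Ideal R} [I.IsTwoSided] (hI : I ≠ ⊤) {x : R}
    (hx : x ∈ I) : x ∈ Set.center R := by
  have : Nontrivial (R ⧸ I) := Ideal.Quotient.nontrivial_iff.mpr hI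
  refine mem_center_of_one_add_mem_center ?_
  by_contra h1x
  obtain ⟨b, c, hb, hc, hbc⟩ := h (1 + x) fun h' => h1x h'.1
  let f := Ideal.Quotient.mk I
  have hsum : f b + f c = 1 := by
    rw [← map_add, ← hbc, map_add, map_one, Ideal.Quotient.eq_zero_iff_mem.mpr hx, add_zero]
  have hcomm : Commute (f b) (f c) := by
    rw [eq_sub_of_add_eq' hsum]
    exact (Commute.one_right _).sub_right (Commute.refl _)
  exact not_isNilpotent_one (hsum ▸ hcomm.isNilpotent_add (hb.map f) (hc.map f))

theorem exists_ne_zero_forall_mul_mem_center [Nontrivial R] (h : TwoNilSum R)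
    (hs : ¬IsSimpleRing R) : ∃ z : R, z ≠ 0 ∧ ∀ a, z * a ∈ Set.center R := by
  obtain ⟨I, hI0, hI⟩ : ∃ I : TwoSidedIdeal R, I ≠ ⊥ ∧ I ≠ ⊤ := by
    by_contra! hI
    exact hs (.of_eq_bot_or_eq_top fun I => or_iff_not_imp_left.mpr (hI I))
  obtain ⟨z, hz, hz0⟩ : ∃ z ∈ I, z ≠ 0 := by
    by_contra! hI'
    exact hI0 (eq_bot_iff.mpr fun x hx => (TwoSidedIdeal.mem_bot R).mpr (hI' x hx))
  have hI' : I.asIdeal ≠ ⊤ := fun h1 =>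
    hI (I.eq_top (TwoSidedIdeal.mem_asIdeal.mp (h1 ▸ Submodule.mem_top)))
  exact ⟨z, hz0, fun a =>
    h.mem_center_of_mem hI' (TwoSidedIdeal.mem_asIdeal.mpr (I.mul_mem_right z a hz))⟩

theorem mem_center_of_isUnit (h : TwoNilSum R) {z : R} (hz0 : z ≠ 0)
    (hz : ∀ a, z * a ∈ Set.center R) {u : R} (hu : IsUnit u) : u ∈ Set.center R := by
  have hzc : ∀ g, g * z = z * g := fun g => by
    simpa using Semigroup.mem_center_iff.mp (hz 1) g
  let J : Ideal R := (⊥ : Ideal R).colon {z}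
  have hJ : ∀ r, r ∈ J ↔ r * z = 0 := fun r => by simp [J]
  have : J.IsTwoSided := ⟨fun s hr => (hJ _).mpr <| by
    rw [mul_assoc, hzc, ← mul_assoc, (hJ _).mp hr, zero_mul]⟩
  have : Nontrivial (R ⧸ J) :=
    Ideal.Quotient.nontrivial_iff.mpr fun h1 => hz0 (by simpa using (hJ 1).mp (h1 ▸ trivial))
  by_contra hu'
  obtain ⟨b, c, hb, hc, rfl⟩ := h u fun h' => hu' h'.1
  let f := Ideal.Quotient.mk J
  have hcomm : Commute (f b) (f c) := by
    rw [Commute, SemiconjBy, ← map_mul, ← map_mul, Ideal.Quotient.eq, hJ]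
    exact commutator_mul_eq_zero_of_forall_mul_mem_center hz b c
  exact (hcomm.isNilpotent_add (hb.map f) (hc.map f)).not_isUnit (map_add f b c ▸ hu.map f)

theorem mul_comm_of_forall_isUnit_mem_center (h : TwoNilSum R)
    (hunit : ∀ u : R, IsUnit u → u ∈ Set.center R) (a b : R) : a * b = b * a := by
  have hnil : ∀ n : R, IsNilpotent n → n ∈ Set.center R := fun n hn =>
    mem_center_of_one_add_mem_center (hunit _ hn.isUnit_one_add)
  suffices hb : b ∈ Set.center R from (Semigroup.mem_center_iff.mp hb a)
  by_cases hcu : b ∈ Set.center R ∧ IsUnit b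
  · exact hcu.1
  obtain ⟨n, m, hn, hm, rfl⟩ := h b hcu
  exact Set.add_mem_center (hnil n hn) (hnil m hm)

theorem mul_comm_of_not_isSimpleRing [Nontrivial R] (h : TwoNilSum R) (hs : ¬IsSimpleRing R) :
    ∀ a b : R, a * b = b * a := by
  obtain ⟨z, hz0, hz⟩ := h.exists_ne_zero_forall_mul_mem_center hs
  exact h.mul_comm_of_forall_isUnit_mem_center fun u => h.mem_center_of_isUnit hz0 hz

end Ring

theorem isNilpotent_of_not_isUnit {R : Type*} [CommRing R] (h : TwoNilSum R) {a : R}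
    (ha : ¬IsUnit a) : IsNilpotent a := by
  obtain ⟨b, c, hb, hc, rfl⟩ := h a fun h' => ha h'.2
  exact (Commute.all b c).isNilpotent_add hb hc

end TwoNilSum

theorem twoNilSum_iff_isLocalRing {R : Type*} [CommRing R] [Nontrivial R] :
    TwoNilSum R ↔ IsLocalRing R ∧ ∀ x ∈ Ideal.jacobson (⊥ : Ideal R), IsNilpotent x := by
  constructor
  · intro h
    refine ⟨.of_nonunits_add fun a b ha hb => ?_, fun x hx => h.isNilpotent_of_not_isUnit ?_⟩
    · exact ((Commute.all a b).isNilpotent_add (h.isNilpotent_of_not_isUnit ha)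
        (h.isNilpotent_of_not_isUnit hb)).not_isUnit
    · exact fun hu => bot_ne_top (Ideal.jacobson_eq_top_iff.mp (Ideal.eq_top_of_isUnit_mem _ hx hu))
  · rintro ⟨hloc, hnil⟩ a ha
    have hna : ¬IsUnit a := fun hu => ha ⟨Semigroup.mem_center_iff.mpr fun g => mul_comm g a, hu⟩
    refine ⟨a, 0, hnil a ?_, .zero, (add_zero a).symm⟩
    rw [IsLocalRing.jacobson_eq_maximalIdeal ⊥ bot_ne_top]
    exact (IsLocalRing.mem_maximalIdeal a).mpr hna

theorem stmt_6 (R : Type*) [Ring R] [Nontrivial R] :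
    TwoNilSum R ↔
      (IsSimpleRing R ∧ TwoNilSum R) ∨
        ((∀ a b : R, a * b = b * a) ∧ IsLocalRing R ∧
          ∀ x ∈ Ideal.jacobson (⊥ : Ideal R), IsNilpotent x) := by
  constructor
  · intro h
    by_cases hs : IsSimpleRing R
    · exact .inl ⟨hs, h⟩
    have hcomm := h.mul_comm_of_not_isSimpleRing hs
    let : CommRing R := { ‹Ring R› with mul_comm := hcomm }
    exact .inr ⟨hcomm, twoNilSum_iff_isLocalRing.mp h⟩
  · rintro (⟨-, h⟩ | ⟨hcomm, hloc⟩)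
    · exact h
    let : CommRing R := { ‹Ring R› with mul_comm := hcomm }
    exact twoNilSum_iff_isLocalRing.mpr hloc
end

section
/- Let R be a nontrivial ring with the 2-nil-sum property and let 0 ≠ x ∈ J(R). Then for all a, b ∈ R, (ab - ba)x = 0; that is, every additive commutator annihilates x. -/
/-!
Elements of `J(R)` are central: for `j ∈ J(R)`, the unit `1 + j` cannot be a sum `b + c` of
nilpotents, since then `b = (1 - c) + j` would be a unit plus an element of `J(R)` and hence
left invertible, which a nilpotent in a nontrivial ring is not. So `1 + j` is a central unit.
Once `x` and `b * x` are central, `a * b * x = b * x * a = b * a * x`.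
-/

theorem IsNilpotent.mul_ne_one {M : Type*} [MonoidWithZero M] [Nontrivial M] {b : M}
    (hb : IsNilpotent b) (z : M) : z * b ≠ 1 := fun hz => by
  obtain ⟨k, hk⟩ := hb
  exact not_isLeftRegular_zero_iff.mpr ‹_› (hk ▸ (isLeftRegular_of_mul_eq_one hz).pow k)

/-- `Ideal.jacobson` is taken for left ideals, so only a left inverse is produced. -/
theorem IsUnit.exists_mul_add_eq_one_of_mem_jacobson_bot {R : Type*} [Ring R] {u j : R}
    (hu : IsUnit u) (hj : j ∈ Ideal.jacobson (⊥ : Ideal R)) : ∃ z, z * (u + j) = 1 := by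
  obtain ⟨u, rfl⟩ := hu
  have hjac : ↑u⁻¹ * j ∈ Ideal.jacobson (⊥ : Ideal R) := Ideal.mul_mem_left _ _ hj
  obtain ⟨s, hs⟩ := Ideal.exists_mul_add_sub_mem_of_mem_jacobson _ hjac
  rw [Ideal.mem_bot, sub_eq_zero] at hs
  refine ⟨s * ↑u⁻¹, ?_⟩
  rw [← hs, mul_assoc, mul_add, Units.inv_mul, add_comm]

theorem TwoNilSum.mem_center_of_mem_jacobson {R : Type*} [Ring R] [Nontrivial R]
    (h : TwoNilSum R) {j : R} (hj : j ∈ Ideal.jacobson (⊥ : Ideal R)) : j ∈ Set.center R := by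
  by_cases hcu : 1 + j ∈ Set.center R ∧ IsUnit (1 + j)
  · simpa using Set.add_mem_center hcu.1 (Set.neg_mem_center (Set.one_mem_center (M := R)))
  · obtain ⟨b, c, hb, hc, hbc⟩ := h _ hcu
    have hb_eq : b = (1 - c) + j := by rw [eq_sub_of_add_eq hbc.symm]; abel
    obtain ⟨z, hz⟩ := hc.isUnit_one_sub.exists_mul_add_eq_one_of_mem_jacobson_bot hj
    exact absurd (hb_eq ▸ hz) (hb.mul_ne_one z)

theorem stmt_8_general (R : Type*) [Ring R] [Nontrivial R] (h : TwoNilSum R)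
    (x : R) (hxJ : x ∈ Ideal.jacobson (⊥ : Ideal R)) :
    ∀ a b : R, (a * b - b * a) * x = 0 := by
  intro a b
  have hx := Semigroup.mem_center_iff.mp (h.mem_center_of_mem_jacobson hxJ)
  have hbx := Semigroup.mem_center_iff.mp
    (h.mem_center_of_mem_jacobson (Ideal.mul_mem_left _ b hxJ))
  rw [sub_mul, sub_eq_zero]
  calc a * b * x = b * x * a := by rw [mul_assoc, hbx]
    _ = b * a * x := by rw [mul_assoc, ← hx, mul_assoc]

theorem stmt_8 (R : Type*) [Ring R] [Nontrivial R] (h : TwoNilSum R)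
    (x : R) (hx0 : x ≠ 0) (hxJ : x ∈ Ideal.jacobson (⊥ : Ideal R)) :
    ∀ a b : R, (a * b - b * a) * x = 0 :=
  stmt_8_general R h x hxJ
end

section
/- If R is a nontrivial ring in which every non central-unit a can be written as a = b + c with b² = 0 and c nilpotent, then R is commutative. -/
/-!
Square-zero and nilpotent elements are central; then every element is central, being either a
central unit or a sum of two central elements. The hypothesis first forces all idempotents to be
trivial. If a square-zero `b` were not central, `1 + b` would decompose as `β + c`, making
`b - β = c - 1` a unit; but for square-zero `b`, `β` with `z = bβ + βb` a unit, `bβz⁻¹` and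
`βbz⁻¹` are complementary idempotents and neither can vanish. Once square-zero elements are
central, a non-central nilpotent `n` gives `1 + n = b + c` with `c = 1 + (n - b)` both a unit and
nilpotent.
-/

section

variable {R : Type*} [Ring R]

theorem eq_zero_of_eq_sub_mul_of_eq_zero {u : ℕ → R} {y : R}
    (hrec : ∀ k, u k = (u (k + 1) - u (k + 2)) * y) {N : ℕ}
    (hN : u N = 0) (hN₁ : u (N + 1) = 0) {k : ℕ} (hk : k ≤ N) : u k = 0 := by
  refine (Nat.decreasingInduction (motive := fun k _ => u k = 0 ∧ u (k + 1) = 0)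
    (fun k _ ih => ⟨?_, ih.1⟩) ⟨hN, hN₁⟩ hk).1
  rw [hrec, ih.1, ih.2, sub_zero, zero_mul]

/-- With `x = e b e`, the corners `u k = e c^k e` satisfy `u (k+2) = u (k+1) - u k * x`, so each
`u k` is `e - x s` for some `s` commuting with `x`. As `u N = 0`, `x` is invertible in `eRe`, and
the recurrence runs backwards from `u N = u (N+1) = 0` down to `u 0 = e`. -/
theorem IsIdempotentElem.eq_zero_of_eq_add {e b c : R} (he : IsIdempotentElem e)
    (hb : b ^ 2 = 0) (hc : IsNilpotent c) (hebc : e = b + c) : e = 0 := by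
  obtain ⟨N, hN⟩ := hc
  have hc : c = e - b := by rw [hebc, add_sub_cancel_left]
  have hee : ∀ y, e * (e * y) = e * y := fun y => by rw [← mul_assoc, he.eq]
  set x := e * b * e
  set u : ℕ → R := fun k => e * c ^ k * e
  have hce : c * e = e - b * e := by rw [hc, sub_mul, he.eq]
  have hcce : c * (c * e) = c * e - x := by
    have hcb : c * b = e * b := by rw [hc, sub_mul, ← sq, hb, sub_zero]
    conv_lhs => rw [hce]
    rw [mul_sub, ← mul_assoc, hcb]
  have hrec : ∀ k, u (k + 2) = u (k + 1) - u k * x := fun k =>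
    calc e * c ^ (k + 2) * e = e * c ^ k * (c * (c * e)) := by simp only [pow_succ, mul_assoc]
      _ = u (k + 1) - u k * x := by simp only [hcce, mul_sub, u, x, pow_succ, mul_assoc, hee]
  have hu₀ : u 0 = e := by simp only [u, pow_zero, mul_one, he.eq]
  have hu₁ : u 1 = e - x := by simp only [u, pow_one, mul_assoc, hce, mul_sub, he.eq, x]
  have hex : e * x = x := by simp only [x, mul_assoc, hee]
  have hue : ∀ k, u k * e = u k := fun k => by simp only [u, mul_assoc, he.eq]
  have huN : u N = 0 := by simp only [u, hN, mul_zero, zero_mul]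
  have huN₁ : u (N + 1) = 0 := by simp only [u, pow_succ, hN, zero_mul, mul_zero]
  clear_value u x
  have hform : ∀ k, ∃ s, Commute x s ∧ u k = e - x * s := by
    intro k
    induction k using Nat.twoStepInduction with
    | zero => exact ⟨0, Commute.zero_right x, by rw [hu₀, mul_zero, sub_zero]⟩
    | one => exact ⟨1, Commute.one_right x, by rw [hu₁, mul_one]⟩
    | more k ih₀ ih₁ =>
      obtain ⟨s₀, hs₀, hu₀⟩ := ih₀
      obtain ⟨s₁, hs₁, hu₁⟩ := ih₁
      refine ⟨s₁ + 1 - s₀ * x, ?_, ?_⟩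
      · exact (hs₁.add_right (Commute.one_right x)).sub_right (hs₀.mul_right (Commute.refl x))
      · rw [hrec, hu₀, hu₁, sub_mul, hex]
        noncomm_ring
  obtain ⟨s, -, hs⟩ := hform N
  have hexs : e = x * s := sub_eq_zero.mp (hs ▸ huN)
  have hrec' : ∀ k, u k = (u (k + 1) - u (k + 2)) * s := fun k =>
    calc u k = u k * x * s := by rw [mul_assoc, ← hexs, hue]
      _ = (u (k + 1) - u (k + 2)) * s := by rw [hrec, sub_sub_cancel]
  rw [← hu₀]
  exact eq_zero_of_eq_sub_mul_of_eq_zero hrec' huN huN₁ N.zero_le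

theorem commute_mul_add_mul_of_sq_eq_zero {b β : R} (hb : b ^ 2 = 0) :
    Commute b (b * β + β * b) := by
  rw [sq] at hb
  show b * (b * β + β * b) = (b * β + β * b) * b
  rw [mul_add, add_mul, ← mul_assoc, hb, mul_assoc β, hb, zero_mul, mul_zero, zero_add, add_zero,
    mul_assoc]

theorem mul_ne_zero_of_isUnit_mul_add_mul [Nontrivial R] {b β : R} (hb : b ^ 2 = 0)
    (hz : IsUnit (b * β + β * b)) : b * β ≠ 0 := by
  intro hbβ
  have hbz : b * (b * β + β * b) = 0 := by
    rw [(commute_mul_add_mul_of_sq_eq_zero hb).eq, add_mul, hbβ, zero_mul, zero_add, mul_assoc,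
      ← sq, hb, mul_zero]
  obtain rfl : b = 0 := hz.mul_left_eq_zero.mp hbz
  simp at hz

theorem not_isUnit_sub_of_sq_eq_zero [Nontrivial R]
    (hidem : ∀ e : R, IsIdempotentElem e → e = 0 ∨ e = 1) {b β : R}
    (hb : b ^ 2 = 0) (hβ : β ^ 2 = 0) : ¬ IsUnit (b - β) := by
  intro hδ
  have hz : IsUnit (b * β + β * b) := by
    have hδ2 : (b - β) * (b - β) = -(b * β + β * b) := by
      rw [sub_mul, mul_sub, mul_sub, ← sq, ← sq, hb, hβ]; abel
    simpa only [hδ2, IsUnit.neg_iff] using hδ.mul hδ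
  obtain ⟨w, hw⟩ := hz
  have hbw : Commute b ↑w⁻¹ := (hw ▸ commute_mul_add_mul_of_sq_eq_zero hb).units_inv_right
  have hβw : Commute β ↑w⁻¹ :=
    (hw ▸ add_comm (β * b) _ ▸ commute_mul_add_mul_of_sq_eq_zero hβ).units_inv_right
  have hsum : b * β * ↑w⁻¹ + β * b * ↑w⁻¹ = 1 := by rw [← add_mul, ← hw, w.mul_inv]
  have hE : IsIdempotentElem (b * β * ↑w⁻¹) := by
    have hbβbβ : b * β * (b * β) = b * β * ↑w := by
      rw [hw, mul_add, mul_assoc b β (β * b), ← mul_assoc β β, ← sq β, hβ, zero_mul, mul_zero,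
        add_zero]
    calc b * β * ↑w⁻¹ * (b * β * ↑w⁻¹) = b * β * (b * β) * (↑w⁻¹ * ↑w⁻¹) :=
          ((hbw.mul_left hβw).symm).mul_mul_mul_comm _ _
      _ = b * β * ↑w⁻¹ := by rw [hbβbβ, mul_assoc, w.mul_inv_cancel_left]
  rcases hidem _ hE with hE | hE
  · exact mul_ne_zero_of_isUnit_mul_add_mul hb (hw ▸ w.isUnit) ((Units.mul_left_eq_zero _).mp hE)
  · rw [hE, add_eq_left] at hsum
    exact mul_ne_zero_of_isUnit_mul_add_mul hβ (add_comm (b * β) _ ▸ hw ▸ w.isUnit)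
      ((Units.mul_left_eq_zero _).mp hsum)

theorem not_isCentralUnit_one_add {x : R} (hx : x ∉ Subring.center R) :
    ¬ (1 + x ∈ Set.center R ∧ IsUnit (1 + x)) := fun h =>
  hx (by simpa using sub_mem (show 1 + x ∈ Subring.center R from h.1) (one_mem _))

end

/-- The 2-nil-sum property of type `(2, ∞)`. -/
def IsSqZeroNilSumRing (R : Type*) [Ring R] : Prop :=
  ∀ a : R, ¬ (a ∈ Set.center R ∧ IsUnit a) → ∃ b c : R, b ^ 2 = 0 ∧ IsNilpotent c ∧ a = b + c

namespace IsSqZeroNilSumRing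

variable {R : Type*} [Ring R]

theorem eq_zero_or_eq_one_of_isIdempotentElem (h : IsSqZeroNilSumRing R) {e : R}
    (he : IsIdempotentElem e) : e = 0 ∨ e = 1 := by
  by_cases hu : IsUnit e
  · exact .inr ((IsIdempotentElem.iff_eq_one_of_isUnit hu).mp he)
  · obtain ⟨b, c, hb, hc, hebc⟩ := h e (fun he' => hu he'.2)
    exact .inl (he.eq_zero_of_eq_add hb hc hebc)

theorem mem_center_of_sq_eq_zero [Nontrivial R] (h : IsSqZeroNilSumRing R) {b : R}
    (hb : b ^ 2 = 0) : b ∈ Subring.center R := by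
  by_contra hcen
  obtain ⟨β, c, hβ, hc, hbc⟩ := h _ (not_isCentralUnit_one_add hcen)
  have hδ : b - β = c - 1 := by rw [sub_eq_sub_iff_add_eq_add, add_comm, hbc, add_comm]
  exact not_isUnit_sub_of_sq_eq_zero (fun _ => h.eq_zero_or_eq_one_of_isIdempotentElem) hb hβ
    (hδ ▸ hc.isUnit_sub_one)

theorem mem_center_of_isNilpotent [Nontrivial R] (h : IsSqZeroNilSumRing R) {n : R}
    (hn : IsNilpotent n) : n ∈ Subring.center R := by
  by_contra hcen
  obtain ⟨b, c, hb, hc, hbc⟩ := h _ (not_isCentralUnit_one_add hcen)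
  have hcomm : Commute n b := Subring.mem_center_iff.mp (h.mem_center_of_sq_eq_zero hb) n
  have hc' : c = 1 + (n - b) := by rw [add_sub, hbc, add_sub_cancel_left]
  exact hc.not_isUnit (hc' ▸ (hcomm.isNilpotent_sub hn ⟨2, hb⟩).isUnit_one_add)

theorem mem_center [Nontrivial R] (h : IsSqZeroNilSumRing R) (a : R) : a ∈ Subring.center R := by
  by_cases ha : a ∈ Set.center R ∧ IsUnit a
  · exact ha.1
  obtain ⟨b, c, hb, hc, rfl⟩ := h a ha
  exact add_mem (h.mem_center_of_sq_eq_zero hb) (h.mem_center_of_isNilpotent hc)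

end IsSqZeroNilSumRing

theorem stmt_11 (R : Type*) [Ring R] [Nontrivial R]
    (h : ∀ a : R, ¬ (a ∈ Set.center R ∧ IsUnit a) →
      ∃ b c : R, b ^ 2 = 0 ∧ IsNilpotent c ∧ a = b + c) :
    ∀ a b : R, a * b = b * a := fun a b =>
  (Subring.mem_center_iff.mp (IsSqZeroNilSumRing.mem_center h a) b).symm
end

section
/- Let R be a ring and let e ∈ R be an idempotent with e ≠ 1. If e = b + c where b² = 0 and c is nilpotent, then e = 0. -/
/-!
Put `x = e b e`. Since `b² = 0` and `c = e - b`, the corner elements `A k = e cᵏ e` satisfy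
`A (k + 2) = A (k + 1) - A k x`, so each `A k` has the form `e - x g` with `g ∈ eR`.
Nilpotence of `c` makes some `A k` vanish, giving `x g = e`. Then `c (1 - c) g = c b g = e b g = e`,
so `e = u e g` with `u = c (1 - c)` nilpotent, and iterating gives `e = uⁿ e gⁿ = 0`.
-/

theorem IsNilpotent.eq_zero_of_eq_mul_mul {R : Type*} [Ring R] {u a v : R}
    (hu : IsNilpotent u) (h : a = u * a * v) : a = 0 := by
  have hpow : ∀ k : ℕ, a = u ^ k * a * v ^ k := by
    intro k
    induction k with
    | zero => simp
    | succ k ih =>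
      calc a = u ^ k * (u * a * v) * v ^ k := by rwa [← h]
        _ = u ^ (k + 1) * a * v ^ (k + 1) := by
          rw [_root_.pow_succ, _root_.pow_succ']; simp only [mul_assoc]
  obtain ⟨n, hn⟩ := hu
  simpa [hn] using hpow n

namespace IsIdempotentElem

variable {R : Type*} [Ring R] {e b c : R}

theorem mul_pow_add_two_mul (he : IsIdempotentElem e) (hb : b * b = 0) (hsum : e = b + c)
    (k : ℕ) : e * c ^ (k + 2) * e = e * c ^ (k + 1) * e - e * c ^ k * e * (e * b * e) := by
  have hc : c = e - b := eq_sub_of_add_eq' hsum.symm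
  have hb_right : e * c ^ (k + 1) * b = e * c ^ k * e * b := by
    rw [pow_succ, hc]
    simp only [mul_sub, sub_mul, mul_assoc, hb, mul_zero, sub_zero]
  calc e * c ^ (k + 2) * e = e * c ^ (k + 1) * e - e * c ^ (k + 1) * b * e := by
        rw [pow_succ _ (k + 1), hc]
        simp only [mul_sub, sub_mul, mul_assoc, he.eq]
    _ = e * c ^ (k + 1) * e - e * c ^ k * e * (e * b * e) := by
        rw [hb_right]
        simp only [mul_assoc, ← mul_assoc e e, he.eq]

theorem exists_mul_pow_mul_eq_sub (he : IsIdempotentElem e) (hb : b * b = 0)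
    (hsum : e = b + c) (k : ℕ) : ∃ g, e * g = g ∧ e * c ^ k * e = e - e * b * e * g := by
  have hx_left : e * (e * b * e) = e * b * e := by rw [← mul_assoc, ← mul_assoc, he.eq]
  have hx_right : e * b * e * e = e * b * e := by rw [mul_assoc, he.eq]
  induction k using Nat.twoStepInduction with
  | zero => exact ⟨0, mul_zero e, by simp [he.eq]⟩
  | one =>
    refine ⟨e, he.eq, ?_⟩
    rw [pow_one, eq_sub_of_add_eq' hsum.symm]
    simp only [mul_sub, sub_mul, mul_assoc, he.eq]
  | more k ih₀ ih₁ =>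
    obtain ⟨g₀, hg₀, hA₀⟩ := ih₀
    obtain ⟨g₁, hg₁, hA₁⟩ := ih₁
    refine ⟨g₁ + e - g₀ * (e * b * e), ?_, ?_⟩
    · rw [mul_sub, mul_add, hg₁, he.eq, ← mul_assoc, hg₀]
    · rw [mul_pow_add_two_mul he hb hsum, hA₀, hA₁, sub_mul, hx_left, mul_sub, mul_add, hx_right]
      noncomm_ring

theorem exists_mul_mul_mul_eq_self (he : IsIdempotentElem e) (hb : b * b = 0)
    (hc : IsNilpotent c) (hsum : e = b + c) : ∃ g, e * g = g ∧ e * b * e * g = e := by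
  obtain ⟨n, hn⟩ := hc
  obtain ⟨g, hg, hA⟩ := exists_mul_pow_mul_eq_sub he hb hsum n
  rw [hn, mul_zero, zero_mul, eq_comm, sub_eq_zero] at hA
  exact ⟨g, hg, hA.symm⟩

end IsIdempotentElem

theorem stmt_12_general (R : Type*) [Ring R] (e : R) (he : e * e = e)
    (b c : R) (hb : b ^ 2 = 0) (hc : IsNilpotent c) (hsum : e = b + c) :
    e = 0 := by
  rw [pow_two] at hb
  obtain ⟨g, hg, hxg⟩ := IsIdempotentElem.exists_mul_mul_mul_eq_self he hb hc hsum
  have hc_eq : c = e - b := eq_sub_of_add_eq' hsum.symm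
  have hu : IsNilpotent (c * (1 - c)) :=
    ((Commute.one_right c).sub_right (Commute.refl c)).isNilpotent_mul_right hc
  have h1c : (1 - c) * g = b * g := by
    rw [hc_eq, sub_mul, one_mul, sub_mul, hg, sub_sub_cancel]
  refine hu.eq_zero_of_eq_mul_mul (v := g) ?_
  calc e = e * b * e * g := hxg.symm
    _ = (e - b) * (b * g) := by
        rw [mul_assoc _ e g, hg, sub_mul, ← mul_assoc b b, hb, zero_mul, sub_zero, mul_assoc]
    _ = c * (1 - c) * e * g := by
        rw [mul_assoc _ e g, hg, mul_assoc, h1c, hc_eq]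

theorem stmt_12 (R : Type*) [Ring R] (e : R) (he : e * e = e) (hne : e ≠ 1)
    (b c : R) (hb : b ^ 2 = 0) (hc : IsNilpotent c) (hsum : e = b + c) :
    e = 0 :=
  stmt_12_general R e he b c hb hc hsum
end

section
/- Let R be a ring, n ≥ 2, and let A ∈ M_n(R) be a matrix with a_{i+1,i} = 1 for 1 ≤ i ≤ n−1 and a_{ij} = 0 for i > j+1 (lower Hessenberg with unit subdiagonal and zeros below). Then for 1 ≤ k ≤ n, the (k,1)-entry of A^k equals a_{11} + a_{22} + ⋯ + a_{kk}. In particular, the (n,1)-entry of A^n is the trace of A. -/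
/-! The first column of `A ^ m` vanishes below row `m` and has entry `1` in row `m`, since each
multiplication by `A` shifts it down by one through the unit subdiagonal. Hence
`(A ^ (k + 1)) k 0 = A k (k - 1) * (A ^ k) (k - 1) 0 + A k k * (A ^ k) k 0
  = (A ^ k) (k - 1) 0 + A k k`, and induction on `k` gives the partial trace. -/

section LowerHessenberg

variable {R : Type*} [Ring R] {n : ℕ} {A : Matrix (Fin (n + 1)) (Fin (n + 1)) R}

theorem hessenberg_pow_apply_zero_of_lt
    (hlow : ∀ i j : Fin (n + 1), (j : ℕ) + 1 < i → A i j = 0)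
    (m : ℕ) {i : Fin (n + 1)} (hi : m < i) : (A ^ m) i 0 = 0 := by
  induction m generalizing i with
  | zero => exact Matrix.one_apply_ne (Fin.pos_iff_ne_zero.mp hi)
  | succ m ih =>
    rw [pow_succ', Matrix.mul_apply]
    refine Finset.sum_eq_zero fun x _ => ?_
    rcases lt_or_ge ((x : ℕ) + 1) i with hx | hx
    · rw [hlow i x hx, zero_mul]
    · rw [ih (by omega), mul_zero]

theorem hessenberg_mul_pow_apply_zero_eq_zero
    (hlow : ∀ i j : Fin (n + 1), (j : ℕ) + 1 < i → A i j = 0) {m : ℕ} {i x : Fin (n + 1)}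
    (hx : (x : ℕ) + 1 < i ∨ m < x) : A i x * (A ^ m) x 0 = 0 := by
  rcases hx with hx | hx
  · rw [hlow i x hx, zero_mul]
  · rw [hessenberg_pow_apply_zero_of_lt hlow m hx, mul_zero]

theorem hessenberg_pow_self_apply_zero
    (hsub : ∀ i j : Fin (n + 1), (i : ℕ) = j + 1 → A i j = 1)
    (hlow : ∀ i j : Fin (n + 1), (j : ℕ) + 1 < i → A i j = 0) (i : Fin (n + 1)) :
    (A ^ (i : ℕ)) i 0 = 1 := by
  induction i using Fin.induction with
  | zero => simp
  | succ i ih =>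
    rw [Fin.val_succ, pow_succ', Matrix.mul_apply,
      Finset.sum_eq_single_of_mem i.castSucc (Finset.mem_univ _)]
    · rw [hsub _ _ (by simp), ← Fin.val_castSucc, ih, one_mul]
    · intro x _ hx
      refine hessenberg_mul_pow_apply_zero_eq_zero hlow ?_
      rw [← Fin.val_ne_iff] at hx
      simp only [Fin.val_succ, Fin.val_castSucc] at hx ⊢
      omega

theorem hessenberg_pow_succ_self_apply_zero
    (hsub : ∀ i j : Fin (n + 1), (i : ℕ) = j + 1 → A i j = 1)
    (hlow : ∀ i j : Fin (n + 1), (j : ℕ) + 1 < i → A i j = 0) (i : Fin (n + 1)) :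
    (A ^ ((i : ℕ) + 1)) i 0 = ∑ j ∈ Finset.Iic i, A j j := by
  induction i using Fin.induction with
  | zero => simp [show Finset.Iic (0 : Fin (n + 1)) = {0} from Finset.Iic_bot]
  | succ i ih =>
    have hstep : (A ^ ((i.succ : ℕ) + 1)) i.succ 0 =
        A i.succ i.castSucc * (A ^ ((i.castSucc : ℕ) + 1)) i.castSucc 0 +
          A i.succ i.succ * (A ^ (i.succ : ℕ)) i.succ 0 := by
      rw [pow_succ', Matrix.mul_apply,
        Fintype.sum_eq_add i.castSucc i.succ (Fin.castSucc_lt_succ (i := i)).ne]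
      · simp only [Fin.val_succ, Fin.val_castSucc]
      · rintro x ⟨hx₁, hx₂⟩
        refine hessenberg_mul_pow_apply_zero_eq_zero hlow ?_
        rw [← Fin.val_ne_iff] at hx₁ hx₂
        simp only [Fin.val_succ, Fin.val_castSucc] at hx₁ hx₂ ⊢
        omega
    have hIic : Finset.Iic i.succ = insert i.succ (Finset.Iic i.castSucc) := by
      ext j
      simp only [Finset.mem_Iic, Finset.mem_insert, Fin.le_def, Fin.ext_iff, Fin.val_succ,
        Fin.val_castSucc]
      omega
    rw [hstep, hsub _ _ (by simp), ih, hessenberg_pow_self_apply_zero hsub hlow, hIic,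
      Finset.sum_insert (by simp [Fin.le_def]), one_mul, mul_one, add_comm]

end LowerHessenberg

theorem stmt_14 (R : Type*) [Ring R] (n : ℕ) (hn : 2 ≤ n)
    (A : Matrix (Fin n) (Fin n) R)
    (hsub : ∀ i j : Fin n, (i : ℕ) = (j : ℕ) + 1 → A i j = 1)
    (hlow : ∀ i j : Fin n, (j : ℕ) + 1 < (i : ℕ) → A i j = 0) :
    ∀ k : Fin n, (A ^ ((k : ℕ) + 1)) k ⟨0, by omega⟩ = ∑ i ∈ Finset.Iic k, A i i := by
  obtain ⟨m, rfl⟩ : ∃ m, n = m + 1 := ⟨n - 1, by omega⟩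
  exact hessenberg_pow_succ_self_apply_zero hsub hlow
end

section
/- Let D be a division ring, n ≥ 2, and let A ∈ M_n(D) be a matrix whose only possibly nonzero row is the k-th row. Then A is a sum of two nilpotent matrices if and only if the (k,k)-entry of A is 0. -/
/-!
If `N` and `N - A` are nilpotent, then over `R[t]` the matrices `1 - tN` and `1 - t(N - A)` have
inverses `P` and `Q`, related by the resolvent identity `P - Q = t P A Q`. When `A` vanishes off
its `k`-th row, `(A P A Q)ₖₖ = (A P)ₖₖ (A Q)ₖₖ`, so `c = (A P)ₖₖ` and `d = (A Q)ₖₖ` satisfy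
`c = (1 + t c) d` in `R[t]`. Comparing degrees forces `c = 0`, and the constant term of `c` is `Aₖₖ`.
-/

open Polynomial

theorem Polynomial.eq_zero_of_eq_one_add_X_mul_mul {R : Type*} [Ring R] [NoZeroDivisors R]
    {c d : R[X]} (h : c = (1 + X * c) * d) : c = 0 := by
  nontriviality R
  by_contra hc
  have hd : d ≠ 0 := by
    rintro rfl
    exact hc (by simpa using h)
  have hdeg : (1 + X * c).natDegree = c.natDegree + 1 := by
    rw [natDegree_add_eq_right_of_natDegree_lt] <;> rw [natDegree_X_mul hc]
    simp
  have hne : 1 + X * c ≠ 0 := fun h0 => by simp [h0] at hdeg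
  have := congrArg natDegree h
  rw [natDegree_mul hne hd, hdeg] at this
  omega

namespace Matrix

section ScalarX

variable {ι R : Type*} [Fintype ι] [DecidableEq ι] [Ring R]

theorem isUnit_one_sub_scalar_X_mul {N : Matrix ι ι R[X]} (hN : IsNilpotent N) :
    IsUnit (1 - scalar ι (X : R[X]) * N) :=
  ((scalar_commute X commute_X N).isNilpotent_mul_left hN).isUnit_one_sub

theorem constantCoeff_mapMatrix_inverse_one_sub_scalar_X_mul {N : Matrix ι ι R[X]}
    (hN : IsNilpotent N) :
    constantCoeff.mapMatrix (Ring.inverse (1 - scalar ι (X : R[X]) * N)) = 1 := by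
  have hX : constantCoeff.mapMatrix (scalar ι (X : R[X])) = 0 := by
    ext i j
    simp [diagonal_apply, apply_ite]
  have := congrArg constantCoeff.mapMatrix
    (Ring.inverse_mul_cancel _ (isUnit_one_sub_scalar_X_mul hN))
  rwa [map_mul, map_sub, map_one, map_mul, hX, zero_mul, sub_zero, mul_one] at this

end ScalarX

def IsSupportedOnRow {m n α : Type*} [Zero α] (A : Matrix m n α) (k : m) : Prop :=
  ∀ i, i ≠ k → ∀ j, A i j = 0

namespace IsSupportedOnRow

variable {l m n α : Type*}

theorem map {β : Type*} [Zero α] [Zero β] {A : Matrix m n α} {k : m}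
    (hA : A.IsSupportedOnRow k) {f : α → β} (hf : f 0 = 0) : (A.map f).IsSupportedOnRow k :=
  fun i hi j => by simp [hA i hi j, hf]

section Mul

variable [Fintype m] [NonUnitalNonAssocSemiring α]

theorem mul_right {A : Matrix l m α} {k : l} (hA : A.IsSupportedOnRow k) (M : Matrix m n α) :
    (A * M).IsSupportedOnRow k :=
  fun i hi j => by simp [mul_apply, hA i hi]

theorem mul_apply {B : Matrix m n α} {k : m} (hB : B.IsSupportedOnRow k) (M : Matrix l m α)
    (i : l) (j : n) : (M * B) i j = M i k * B k j := by
  rw [Matrix.mul_apply, Finset.sum_eq_single k (fun i _ hi => by rw [hB i hi, mul_zero])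
    (by simp)]

theorem mul_self_eq_zero {A : Matrix m m α} {k : m} (hA : A.IsSupportedOnRow k)
    (hkk : A k k = 0) : A * A = 0 := by
  ext i j
  rw [hA.mul_apply]
  by_cases hi : i = k
  · rw [hi, hkk, zero_mul, zero_apply]
  · rw [hA i hi, zero_mul, zero_apply]

end Mul

variable [Fintype m] [DecidableEq m] [Ring α] [NoZeroDivisors α]

theorem apply_self_eq_zero_of_isNilpotent {A N : Matrix m m α} {k : m}
    (hA : A.IsSupportedOnRow k) (hN : IsNilpotent N) (hNA : IsNilpotent (N - A)) :
    A k k = 0 := by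
  set T := scalar m (X : α[X])
  set a := C.mapMatrix A
  set x := C.mapMatrix N
  set p := Ring.inverse (1 - T * x)
  set q := Ring.inverse (1 - T * (x - a))
  have ha : a.IsSupportedOnRow k := hA.map (map_zero C)
  have hTa : T * a = a * T := scalar_commute X commute_X a
  have hresolvent : p - q = T * (p * a * q) := by
    rw [Ring.inverse_sub_inverse (iff_of_true (isUnit_one_sub_scalar_X_mul (hN.map _))
        (isUnit_one_sub_scalar_X_mul (map_sub C.mapMatrix N A ▸ hNA.map _))),
      sub_sub_sub_cancel_left, ← mul_sub, sub_sub_cancel, ← mul_assoc, ← (scalar_commute X commute_X p).eq, mul_assoc,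
      mul_assoc, mul_assoc]
  have hap : a * p - a * q = T * ((a * p) * (a * q)) := by
    rw [← mul_sub, hresolvent, ← mul_assoc, ← hTa, mul_assoc, mul_assoc, mul_assoc]
  have hcd : (a * p) k k = (1 + X * (a * p) k k) * (a * q) k k := by
    have := congrArg (· k k) hap
    simp only [sub_apply, T, scalar_apply, diagonal_mul, (ha.mul_right q).mul_apply] at this
    rw [add_mul, one_mul, mul_assoc, ← this, add_sub_cancel]
  have ha₀ : constantCoeff.mapMatrix a = A := by
    ext i j
    simp [a]
  calc A k k = constantCoeff.mapMatrix (a * p) k k := by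
        rw [map_mul, ha₀, constantCoeff_mapMatrix_inverse_one_sub_scalar_X_mul (hN.map _),
          mul_one]
    _ = 0 := (congrArg constantCoeff (eq_zero_of_eq_one_add_X_mul_mul hcd)).trans (map_zero _)

end IsSupportedOnRow

end Matrix

theorem stmt_15_general (D : Type*) [DivisionRing D] (n : ℕ)
    (k : Fin n) (A : Matrix (Fin n) (Fin n) D)
    (hrow : ∀ i : Fin n, i ≠ k → ∀ j : Fin n, A i j = 0) :
    (∃ X Y : Matrix (Fin n) (Fin n) D,
        IsNilpotent X ∧ IsNilpotent Y ∧ A = X + Y) ↔ A k k = 0 := by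
  have hA : A.IsSupportedOnRow k := hrow
  constructor
  · rintro ⟨X, Y, hX, hY, hXY⟩
    refine hA.apply_self_eq_zero_of_isNilpotent hX ?_
    rw [hXY, sub_add_cancel_left]
    exact hY.neg
  · intro hkk
    exact ⟨A, 0, ⟨2, by rw [sq, hA.mul_self_eq_zero hkk]⟩, .zero, (add_zero A).symm⟩

theorem stmt_15 (D : Type*) [DivisionRing D] (n : ℕ) (hn : 2 ≤ n)
    (k : Fin n) (A : Matrix (Fin n) (Fin n) D)
    (hrow : ∀ i : Fin n, i ≠ k → ∀ j : Fin n, A i j = 0) :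
    (∃ X Y : Matrix (Fin n) (Fin n) D,
        IsNilpotent X ∧ IsNilpotent Y ∧ A = X + Y) ↔ A k k = 0 :=
  stmt_15_general D n k A hrow
end

section
/- For a division ring D and n ≥ 1, the matrix ring M_n(D) has the 2-nil-sum property if and only if n = 1 and D is commutative (i.e., D is a field). -/
/-!
If `n ≥ 2`, the matrix unit `E₁₁` is a non-invertible rank-one idempotent. Acting on row vectors
(right multiplication is `D`-linear even when `D` is not commutative), it would be a sum of two
nilpotent endomorphisms, which is impossible in any finite dimension: a common kernel vector of
the two nilpotents and the functional lets one pass to a quotient, and otherwise the image of the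
first nilpotent is a smaller invariant subspace carrying the same configuration. If `n = 1`,
`M₁(D) ≅ D` has no nonzero nilpotents, so the property says that every nonzero element is central.
-/

open Module

theorem LinearMap.smulRight_ne_add_of_isNilpotent {D V : Type*} [DivisionRing D] [AddCommGroup V]
    [Module D V] [FiniteDimensional D V] {φ : V →ₗ[D] D} {u : V} (hφu : φ u = 1)
    {X Y : Module.End D V} (hX : IsNilpotent X) (hY : IsNilpotent Y) :
    φ.smulRight u ≠ X + Y := by
  induction hk : finrank D V using Nat.strong_induction_on generalizing V with
  | _ k ih =>
  intro hsum
  have hsum' (v : V) : X v + Y v = φ v • u := by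
    rw [← LinearMap.add_apply, ← hsum, smulRight_apply]
  have hu : u ≠ 0 := by rintro rfl; simp at hφu
  have : Nontrivial V := nontrivial_of_ne u 0 hu
  obtain ⟨w, hwY, hw0⟩ := Submodule.ne_bot_iff _ |>.1 <|
    mt (LinearMap.isUnit_iff_ker_eq_bot Y).2 hY.not_isUnit
  rw [LinearMap.mem_ker] at hwY
  by_cases hφw : φ w = 0
  · -- `w` spans a line killed by `X`, `Y` and `φ`: pass to the quotient by it.
    have hwX : X w = 0 := by simpa [hwY, hφw] using hsum' w
    set L := D ∙ w
    have hLX : L ≤ L.comap X := (Submodule.span_singleton_le_iff_mem _ _).2 (by simp [hwX])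
    have hLY : L ≤ L.comap Y := (Submodule.span_singleton_le_iff_mem _ _).2 (by simp [hwY])
    have hLφ : L ≤ ker φ := (Submodule.span_singleton_le_iff_mem _ _).2 hφw
    have hlt : finrank D (V ⧸ L) < k := by
      have := L.finrank_quotient_add_finrank
      rw [finrank_span_singleton hw0] at this
      omega
    refine ih _ hlt (φ := L.liftQ φ hLφ) (u := L.mkQ u) (by simpa using hφu)
      (Module.End.IsNilpotent.mapQ hLX hX) (Module.End.IsNilpotent.mapQ hLY hY) rfl ?_
    ext v
    simp [← Submodule.Quotient.mk_add, hsum' v]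
  · -- Otherwise `u ∈ range X`, which is then invariant under `Y = φ.smulRight u - X`.
    have hXu : X ((φ w)⁻¹ • w) = u := by
      simpa [hwY, inv_mul_cancel₀ hφw] using hsum' ((φ w)⁻¹ • w)
    set W := range X
    have huW : u ∈ W := ⟨_, hXu⟩
    have hXW : Set.MapsTo X W W := fun x _ => ⟨x, rfl⟩
    have hYW : Set.MapsTo Y W W := fun x _ => by
      rw [eq_sub_of_add_eq' (hsum' x)]
      exact W.sub_mem (W.smul_mem _ huW) ⟨x, rfl⟩
    have hlt : finrank D W < k := hk ▸ Submodule.finrank_lt <|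
      mt (LinearMap.isUnit_iff_range_eq_top X).2 hX.not_isUnit
    refine ih _ hlt (φ := φ ∘ₗ W.subtype) (u := ⟨u, huW⟩) hφu
      (Module.End.isNilpotent.restrict hXW hX) (Module.End.isNilpotent.restrict hYW hY) rfl ?_
    ext v
    exact (hsum' v).symm

theorem MulEquiv.map_mem_center {M N : Type*} [Semigroup M] [Semigroup N] (e : M ≃* N) {a : M}
    (ha : a ∈ Set.center M) : e a ∈ Set.center N :=
  Semigroup.mem_center_iff.2 fun g => by
    rw [← e.apply_symm_apply g, ← map_mul, ← map_mul, Semigroup.mem_center_iff.1 ha]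

def HasTwoNilSumProperty (R : Type*) [Ring R] : Prop :=
  ∀ a : R, ¬ (a ∈ Set.center R ∧ IsUnit a) → ∃ x y : R, IsNilpotent x ∧ IsNilpotent y ∧ a = x + y

section TwoNilSum

variable {R S : Type*} [Ring R] [Ring S]

theorem HasTwoNilSumProperty.of_ringEquiv (e : R ≃+* S) (h : HasTwoNilSumProperty R) :
    HasTwoNilSumProperty S := by
  intro a ha
  obtain ⟨x, y, hx, hy, hxy⟩ := h (e.symm a) fun ⟨hc, hu⟩ =>
    ha ⟨by simpa using e.toMulEquiv.map_mem_center hc, by simpa using hu.map e⟩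
  exact ⟨e x, e y, hx.map e, hy.map e, by rw [← map_add, ← hxy, e.apply_symm_apply]⟩

theorem RingEquiv.hasTwoNilSumProperty_iff (e : R ≃+* S) :
    HasTwoNilSumProperty R ↔ HasTwoNilSumProperty S :=
  ⟨.of_ringEquiv e, .of_ringEquiv e.symm⟩

end TwoNilSum

theorem DivisionRing.hasTwoNilSumProperty_iff {D : Type*} [DivisionRing D] :
    HasTwoNilSumProperty D ↔ ∀ a b : D, a * b = b * a := by
  constructor
  · intro h a b
    by_cases ha : a ∈ Set.center D
    · exact (Semigroup.mem_center_iff.1 ha b).symm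
    obtain ⟨x, y, hx, hy, rfl⟩ := h a fun hc => ha hc.1
    simp [hx.eq_zero, hy.eq_zero]
  · intro h a ha
    obtain rfl : a = 0 := by
      by_contra ha0
      exact ha ⟨Semigroup.mem_center_iff.2 fun g => h g a, isUnit_iff_ne_zero.2 ha0⟩
    exact ⟨0, 0, IsNilpotent.zero, IsNilpotent.zero, (add_zero 0).symm⟩

namespace Matrix

variable {ι D : Type*} [Fintype ι] [DecidableEq ι]

theorem toLinearMapRight'_pow [Semiring D] (M : Matrix ι ι D) (k : ℕ) :
    (M ^ k).toLinearMapRight' = M.toLinearMapRight' ^ k := by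
  induction k with
  | zero => simp [Module.End.one_eq_id]
  | succ k ih => rw [pow_succ, toLinearMapRight'_mul, ih, pow_succ', Module.End.mul_eq_comp]

theorem isNilpotent_toLinearMapRight' [Semiring D] {M : Matrix ι ι D} (hM : IsNilpotent M) :
    IsNilpotent M.toLinearMapRight' := by
  obtain ⟨k, hk⟩ := hM
  exact ⟨k, by rw [← toLinearMapRight'_pow, hk, map_zero]⟩

theorem not_hasTwoNilSumProperty [Nontrivial ι] [DivisionRing D] :
    ¬ HasTwoNilSumProperty (Matrix ι ι D) := by
  intro h
  obtain ⟨i⟩ : Nonempty ι := inferInstance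
  obtain ⟨j, hji⟩ := exists_ne i
  have hE : ¬ IsUnit (single i i (1 : D)) := fun hu => by
    have := (IsIdempotentElem.iff_eq_one_of_isUnit hu).1 (by simp [IsIdempotentElem])
    simpa [single_apply, hji.symm] using congrFun (congrFun this j) j
  obtain ⟨X, Y, hX, hY, hXY⟩ := h _ fun hc => hE hc.2
  refine (LinearMap.proj (R := D) (φ := fun _ : ι => D) i).smulRight_ne_add_of_isNilpotent
    (u := Pi.single i 1) (by simp) (isNilpotent_toLinearMapRight' hX)
    (isNilpotent_toLinearMapRight' hY) ?_
  rw [← map_add, ← hXY]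
  ext v k
  simp only [LinearMap.coe_comp, LinearMap.coe_smulRight, LinearMap.coe_proj, Function.eval,
    LinearMap.coe_single, Function.comp_apply, Pi.smul_apply, smul_eq_mul, toLinearMapRight'_apply,
    single_vecMul, row_apply, single_apply, mul_ite, mul_one, mul_zero]
  grind

end Matrix

theorem stmt_18 (D : Type*) [DivisionRing D] (n : ℕ) (hn : 1 ≤ n) :
    (∀ A : Matrix (Fin n) (Fin n) D,
        ¬ (A ∈ Set.center (Matrix (Fin n) (Fin n) D) ∧ IsUnit A) →
        ∃ X Y : Matrix (Fin n) (Fin n) D,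
          IsNilpotent X ∧ IsNilpotent Y ∧ A = X + Y) ↔
      n = 1 ∧ ∀ a b : D, a * b = b * a := by
  change HasTwoNilSumProperty _ ↔ _
  obtain rfl | hn2 := hn.eq_or_lt
  · rw [Matrix.uniqueRingEquiv.hasTwoNilSumProperty_iff, DivisionRing.hasTwoNilSumProperty_iff]
    simp
  · have : Nontrivial (Fin n) := Fin.nontrivial_iff_two_le.2 hn2
    simp [Matrix.not_hasTwoNilSumProperty, hn2.ne']
end
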